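/- (Deterministic bound on the conditional bias term I₂) Fix contexts x_1,…,x_n ∈ X and α ∈ [0,1]. For every probability distribution Q on H, | (1/n)Σ_{i=1}^n E_{a∼π_Q(·|x_i)}[c(x_i,a)] − (1/n)Σ_{i=1}^n E_{a∼π0(·|x_i)}[ π_Q(a|x_i)·c(x_i,a)/π0(a|x_i)^α ] | ≤ (1/n)Σ_{i=1}^n E_{a∼π_Q(·|x_i)}[1 − π0(a|x_i)^{1−α}]. -/

import Mathlib

open MeasureTheory ProbabilityTheory Real

/-! Per context and action, `π₀ · (π_Q c / π₀ ^ α) = π_Q c · π₀ ^ (1 - α)`, so the two risks differ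
by `π_Q c (1 - π₀ ^ (1 - α))`. Since `|c| ≤ 1` and `0 < π₀ ^ (1 - α) ≤ 1`, this is at most
`π_Q (1 - π₀ ^ (1 - α))` in absolute value; the triangle inequality sums the bounds. -/

theorem Finset.abs_sum_sub_sum_le {ι R : Type*} [AddCommGroup R] [LinearOrder R]
    [IsOrderedAddMonoid R] (s : Finset ι) {f g b : ι → R} (h : ∀ i ∈ s, |f i - g i| ≤ b i) :
    |∑ i ∈ s, f i - ∑ i ∈ s, g i| ≤ ∑ i ∈ s, b i := by
  rw [← Finset.sum_sub_distrib]
  exact (Finset.abs_sum_le_sum_abs _ _).trans (Finset.sum_le_sum h)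

theorem Real.mul_div_rpow_eq_mul_rpow_one_sub {p : ℝ} (hp : 0 < p) (y α : ℝ) :
    p * (y / p ^ α) = y * p ^ (1 - α) := by
  rw [Real.rpow_sub hp, Real.rpow_one]
  field_simp

theorem abs_sub_mul_div_rpow_le {p q c α : ℝ} (hp : 0 < p) (hp1 : p ≤ 1) (hα : α ≤ 1)
    (hq : 0 ≤ q) (hc : |c| ≤ 1) :
    |q * c - p * (q * c / p ^ α)| ≤ q * (1 - p ^ (1 - α)) := by
  have hweight : 0 ≤ 1 - p ^ (1 - α) :=
    sub_nonneg.2 (Real.rpow_le_one hp.le hp1 (sub_nonneg.2 hα))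
  calc |q * c - p * (q * c / p ^ α)|
      = q * |c| * (1 - p ^ (1 - α)) := by
        rw [Real.mul_div_rpow_eq_mul_rpow_one_sub hp, ← mul_one_sub, abs_mul, abs_mul,
          abs_of_nonneg hq, abs_of_nonneg hweight]
    _ ≤ q * 1 * (1 - p ^ (1 - α)) := by gcongr
    _ = q * (1 - p ^ (1 - α)) := by rw [mul_one]

theorem conditional_bias_bound_general
    {X : Type*} {K : ℕ}
    {H : Type*} [MeasurableSpace H]
    (p0 c : X → Fin K → ℝ)
    (hp0pos : ∀ x a, 0 < p0 x a) (hp0sum : ∀ x, ∑ a, p0 x a = 1)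
    (hc : ∀ x a, c x a ∈ Set.Icc (-1 : ℝ) 0)
    (ev : H → X → Fin K)
    (n : ℕ) (x : Fin n → X)
    (α : ℝ) (hα : α ∈ Set.Icc (0 : ℝ) 1)
    (Q : Measure H) :
    |(n : ℝ)⁻¹ * (∑ i, ∑ a, (Q {h | ev h (x i) = a}).toReal * c (x i) a)
        - (n : ℝ)⁻¹ * ∑ i, ∑ a, p0 (x i) a *
            ((Q {h | ev h (x i) = a}).toReal * c (x i) a / p0 (x i) a ^ α)|
      ≤ (n : ℝ)⁻¹ * ∑ i, ∑ a,
          (Q {h | ev h (x i) = a}).toReal * (1 - p0 (x i) a ^ (1 - α)) := by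
  have hp0le : ∀ x a, p0 x a ≤ 1 := fun x a =>
    hp0sum x ▸ Finset.single_le_sum (fun b _ => (hp0pos x b).le) (Finset.mem_univ a)
  have hc_abs : ∀ x a, |c x a| ≤ 1 := fun x a =>
    abs_le.2 ⟨(hc x a).1, (hc x a).2.trans zero_le_one⟩
  rw [← mul_sub, abs_mul, abs_of_nonneg (by positivity)]
  gcongr
  exact Finset.abs_sum_sub_sum_le _ fun i _ => Finset.abs_sum_sub_sum_le _ fun a _ =>
    abs_sub_mul_div_rpow_le (hp0pos _ _) (hp0le _ _) hα.2 ENNReal.toReal_nonneg (hc_abs _ _)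

/-- **Deterministic bound on the conditional bias term `I₂`.**  For fixed contexts
`x 1, …, x n` and `α ∈ [0,1]`, the gap between the conditional risk of the policy `π_Q`
induced by a posterior `Q` and its smoothed conditional counterpart is bounded by the
conditional bias term. -/
theorem conditional_bias_bound
    {X : Type*} [MeasurableSpace X] {K : ℕ}
    {H : Type*} [MeasurableSpace H]
    (p0 c : X → Fin K → ℝ)
    (hp0pos : ∀ x a, 0 < p0 x a) (hp0sum : ∀ x, ∑ a, p0 x a = 1)
    (hc : ∀ x a, c x a ∈ Set.Icc (-1 : ℝ) 0)
    (ev : H → X → Fin K)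
    (hev : Measurable fun q : H × X => ev q.1 q.2)
    (n : ℕ) (hn : 0 < n) (x : Fin n → X)
    (α : ℝ) (hα : α ∈ Set.Icc (0 : ℝ) 1)
    (Q : Measure H) [IsProbabilityMeasure Q] :
    |(n : ℝ)⁻¹ * (∑ i, ∑ a, (Q {h | ev h (x i) = a}).toReal * c (x i) a)
        - (n : ℝ)⁻¹ * ∑ i, ∑ a, p0 (x i) a *
            ((Q {h | ev h (x i) = a}).toReal * c (x i) a / p0 (x i) a ^ α)|
      ≤ (n : ℝ)⁻¹ * ∑ i, ∑ a,
          (Q {h | ev h (x i) = a}).toReal * (1 - p0 (x i) a ^ (1 - α)) :=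
  conditional_bias_bound_general p0 c hp0pos hp0sum hc ev n x α hα Q
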